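/- arXiv:0705.1912 — 5 statements merged into one kernel-verified Lean document; each statement's English description precedes it below -/
import Mathlib

section
/- Let D be a real m×m matrix with columns d_1,...,d_m, set d_0 = 0 and e_0 = 0, and define h : ℝ^{m+1} → ℝ^{m+1} by h(x,t) = ((tD + (1-t)I_m)x, t). Let I_+, I_- ⊆ {0,1,...,m} be disjoint. If there exist t ≠ 0 and points α in the relative interior of the simplex Δ_{I_+} = conv{e_i : i ∈ I_+} and β in the relative interior of Δ_{I_-} with h(α,t) = h(β,t), then 1 - 1/t is an eigenvalue of D. -/
/-- If the ruled surfaces `h(Δ_{I_+} × ℝ)` and `h(Δ_{I_-} × ℝ)` associated to the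
matrix homotopy `h(x,t) = ((tD + (1-t)I)x, t)` intersect at time `t ≠ 0` (the intersection point
being given by points in the relative interiors of the simplices, i.e. positive convex
combinations), then `1 - 1/t` is an eigenvalue of `D`. -/
theorem stmt0 (m : ℕ) (D : Matrix (Fin m) (Fin m) ℝ)
    (e : Fin (m + 1) → Fin m → ℝ)
    (he0 : e 0 = 0)
    (he : ∀ i : Fin (m + 1), ∀ h : 0 < (i : ℕ),
      e i = Pi.single (⟨(i : ℕ) - 1, by have := i.isLt; omega⟩ : Fin m) 1)
    (Ip Im : Finset (Fin (m + 1))) (hdisj : Disjoint Ip Im)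
    (t : ℝ) (ht : t ≠ 0)
    (a b : Fin (m + 1) → ℝ)
    (ha : ∀ i ∈ Ip, 0 < a i) (ha0 : ∀ i ∉ Ip, a i = 0) (hasum : ∑ i, a i = 1)
    (hb : ∀ i ∈ Im, 0 < b i) (hb0 : ∀ i ∉ Im, b i = 0) (hbsum : ∑ i, b i = 1)
    (heq : (t • D + (1 - t) • (1 : Matrix (Fin m) (Fin m) ℝ)).mulVec (∑ i, a i • e i)
         = (t • D + (1 - t) • (1 : Matrix (Fin m) (Fin m) ℝ)).mulVec (∑ i, b i • e i)) :
    ∃ v : Fin m → ℝ, v ≠ 0 ∧ D.mulVec v = (1 - 1 / t) • v := by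
  -- e i.succ = Pi.single i 1
  have hesucc : ∀ i : Fin m, e i.succ = Pi.single i 1 := by
    intro i
    rw [he i.succ (by simp [Fin.val_succ])]
    ext j
    simp [Pi.single_apply, Fin.ext_iff, Fin.val_succ]
  have hcoord : ∀ (c : Fin (m + 1) → ℝ) (j : Fin m),
      (∑ i, c i • e i) j = c j.succ := by
    intro c j
    rw [Finset.sum_apply, Fin.sum_univ_succ]
    simp [he0, hesucc, Pi.single_apply]
  set α : Fin m → ℝ := ∑ i, a i • e i with hα
  set β : Fin m → ℝ := ∑ i, b i • e i with hβ
  set v : Fin m → ℝ := α - β with hv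
  -- v ≠ 0
  have hsupp : ∀ i : Fin (m + 1), a i ≠ 0 → b i = 0 := by
    intro i hai
    have hIp : i ∈ Ip := by by_contra h; exact hai (ha0 i h)
    exact hb0 i (fun hIm => (Finset.disjoint_left.mp hdisj hIp) hIm)
  have hvne : v ≠ 0 := by
    intro h0
    have hzero : ∀ j : Fin m, a j.succ = 0 ∧ b j.succ = 0 := by
      intro j
      have : α j - β j = 0 := by
        have := congrFun h0 j; simpa [hv] using this
      rw [hα, hβ, hcoord a j, hcoord b j] at this
      by_cases hja : a j.succ = 0
      · constructor
        · exact hja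
        · linarith
      · have := hsupp _ hja
        exact absurd (by linarith : a j.succ = 0) hja
    have ha1 : a 0 = 1 := by
      have := hasum
      rw [Fin.sum_univ_succ] at this
      have hs : ∑ i : Fin m, a i.succ = 0 :=
        Finset.sum_eq_zero fun i _ => (hzero i).1
      linarith [hs]
    have hb1 : b 0 = 1 := by
      have := hbsum
      rw [Fin.sum_univ_succ] at this
      have hs : ∑ i : Fin m, b i.succ = 0 :=
        Finset.sum_eq_zero fun i _ => (hzero i).2
      linarith [hs]
    exact one_ne_zero (hsupp 0 (by rw [ha1]; exact one_ne_zero) ▸ hb1.symm)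
  refine ⟨v, hvne, ?_⟩
  have hMv : (t • D + (1 - t) • (1 : Matrix (Fin m) (Fin m) ℝ)).mulVec v = 0 := by
    rw [hv, Matrix.mulVec_sub, heq, sub_self]
  rw [Matrix.add_mulVec, Matrix.smul_mulVec, Matrix.smul_mulVec,
    Matrix.one_mulVec] at hMv
  have h1 : t • D.mulVec v = (t - 1) • v := by
    have : t • D.mulVec v = -((1 - t) • v) := by
      rw [eq_neg_iff_add_eq_zero]; exact hMv
    rw [this, ← neg_smul]; ring_nf
  have h2 := congrArg (fun w => t⁻¹ • w) h1
  simp only [smul_smul, inv_mul_cancel₀ ht, one_smul] at h2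
  rw [h2]
  congr 1
  field_simp
end

section
/- Let D ∈ ℝ^{m×m} be nonsingular with all negative eigenvalues general, and let ℓ_- be the number of negative eigenvalues of D. Then the signed count Σ_{{I_+,I_-} ∈ 𝒫} sgn(I_+,I_-) · ℐ(h̃(I_+), h̃(I_-)) over all bipartitions of {0,...,m} equals 0 if det D > 0 and equals −1 if det D < 0. -/
open Polynomial Finset

private lemma sign_eq_of_mul_pos' {x e : ℝ} (he : e = 1 ∨ e = -1) (h : 0 < e * x) :
    Real.sign x = e := by
  rcases he with rfl | rfl
  · rw [Real.sign_of_pos (by linarith)]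
  · rw [Real.sign_of_neg (by linarith)]

private lemma prod_neg_sign' {s : Finset ℝ} {f : ℝ → ℝ} (h : ∀ x ∈ s, f x < 0) :
    0 < (-1 : ℝ) ^ s.card * ∏ x ∈ s, f x := by
  classical
  induction s using Finset.cons_induction with
  | empty => simp
  | cons a s ha ih =>
    rw [Finset.prod_cons, Finset.card_cons, pow_succ]
    have h1 := h a (Finset.mem_cons_self a s)
    have h2 : 0 < (-1:ℝ)^s.card * ∏ x ∈ s, f x :=
      ih fun x hx => h x (Finset.mem_cons_of_mem hx)
    nlinarith [mul_pos (neg_pos.2 h1) h2]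

private lemma no_root_mul_pos' {p : Polynomial ℝ} {a b : ℝ} (hab : a ≤ b)
    (h : ∀ x ∈ Set.Icc a b, p.eval x ≠ 0) : 0 < p.eval a * p.eval b := by
  have hc : ContinuousOn (fun x => p.eval x) (Set.Icc a b) :=
    (Polynomial.continuous p).continuousOn
  have ha : p.eval a ≠ 0 := h a ⟨le_refl a, hab⟩
  have hb : p.eval b ≠ 0 := h b ⟨hab, le_refl b⟩
  rcases ha.lt_or_gt with ha' | ha' <;> rcases hb.lt_or_gt with hb' | hb'
  · exact mul_pos_of_neg_of_neg ha' hb'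
  · exfalso
    obtain ⟨x, hx, hx0⟩ := intermediate_value_Icc hab hc ⟨ha'.le, hb'.le⟩
    exact h x hx hx0
  · exfalso
    obtain ⟨x, hx, hx0⟩ := intermediate_value_Icc' hab hc ⟨hb'.le, ha'.le⟩
    exact h x hx hx0
  · exact mul_pos ha' hb'

/-- For a nonsingular matrix `D` all of whose negative eigenvalues are general
(simple, with eigenvector having nonvanishing components of nonzero sum), the signed count of
intersections of the homotopy surfaces, which equals the sum over the negative roots `u` of the
characteristic polynomial `χ_D(u) = det(D − uI)` of `sgn(χ'_D(u))`, is `0` if `det D > 0`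
and `−1` if `det D < 0`. -/
theorem stmt3 (m : ℕ) (D : Matrix (Fin m) (Fin m) ℝ) (hns : D.det ≠ 0)
    (χ : Polynomial ℝ)
    (hχ : χ = Matrix.det (D.map Polynomial.C - (Polynomial.X : Polynomial ℝ) • 1))
    (hgen : ∀ u : ℝ, u < 0 → χ.IsRoot u →
      χ.rootMultiplicity u = 1 ∧
      ∃ v : Fin m → ℝ, v ≠ 0 ∧ D.mulVec v = u • v ∧ (∀ i, v i ≠ 0) ∧ ∑ i, v i ≠ 0) :
    (0 < D.det →
      ∑ u ∈ χ.roots.toFinset.filter (· < 0), Real.sign (χ.derivative.eval u) = 0) ∧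
    (D.det < 0 →
      ∑ u ∈ χ.roots.toFinset.filter (· < 0), Real.sign (χ.derivative.eval u) = -1) := by
  classical
  rcases Nat.eq_zero_or_pos m with rfl | hm
  · have hχ1 : χ = 1 := by rw [hχ]; exact Matrix.det_isEmpty
    have hD : D.det = 1 := Matrix.det_isEmpty
    constructor
    · intro _; simp [hχ1]
    · intro h; rw [hD] at h; norm_num at h
  set S : Finset ℝ := χ.roots.toFinset.filter (· < 0) with hSdef
  set k : ℕ := S.card with hk
  set ε : ℝ := (-1) ^ k with hεdef
  have hε : ε = 1 ∨ ε = -1 := by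
    rcases Nat.even_or_odd k with h | h
    · left; rw [hεdef]; exact h.neg_one_pow
    · right; rw [hεdef]; exact h.neg_one_pow
  -- eval at 0 is the determinant
  have hχ0 : χ.eval 0 = D.det := by
    have h1 : χ.eval 0 = ((D.map C - (X:ℝ[X]) • 1).map (Polynomial.evalRingHom 0)).det := by
      rw [hχ]
      exact RingHom.map_det (Polynomial.evalRingHom (0:ℝ)) (D.map C - (X:ℝ[X]) • 1)
    rw [h1]; congr 1; ext i j
    by_cases hij : i = j <;>
      simp [Matrix.map_apply, Matrix.sub_apply, Matrix.smul_apply, Matrix.one_apply, hij]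
  have hχne : χ ≠ 0 := fun h => hns (by rw [← hχ0, h, Polynomial.eval_zero])
  -- relation to the characteristic polynomial
  have hXone : (X:ℝ[X]) • (1 : Matrix (Fin m) (Fin m) ℝ[X]) = Matrix.scalar (Fin m) X := by
    rw [Matrix.scalar_apply, Matrix.smul_one_eq_diagonal]
  have hcharm : D.map C - (X:ℝ[X]) • 1 = -(Matrix.charmatrix D) := by
    rw [Matrix.charmatrix, neg_sub, hXone]; rfl
  have hmonic := Matrix.charpoly_monic D
  have hχcp : χ = C ((-1:ℝ)^m) * D.charpoly := by
    rw [hχ, hcharm, Matrix.det_neg, Fintype.card_fin, Matrix.charpoly, map_pow, map_neg, map_one]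
  have hdeg : χ.natDegree = m := by
    rw [hχcp, natDegree_C_mul (pow_ne_zero _ (by norm_num : (-1:ℝ) ≠ 0)),
      Matrix.charpoly_natDegree_eq_dim, Fintype.card_fin]
  have hlead : χ.leadingCoeff = (-1:ℝ)^m := by
    rw [hχcp, leadingCoeff_mul, leadingCoeff_C, hmonic.leadingCoeff, mul_one]
  -- membership in S
  have hmemS : ∀ u : ℝ, u ∈ S ↔ (u < 0 ∧ χ.IsRoot u) := by
    intro u
    simp [hSdef, Finset.mem_filter, Multiset.mem_toFinset, Polynomial.mem_roots hχne, and_comm]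
  -- the product of linear factors over S divides χ
  set P : ℝ[X] := ∏ u ∈ S, (X - C u) with hPdef
  have hSval : S.val ≤ χ.roots := by
    rw [Multiset.le_iff_count]
    intro u
    by_cases hu : u ∈ S
    · have h1 : S.val.count u = 1 := Multiset.count_eq_one_of_mem S.nodup hu
      rw [h1, Polynomial.count_roots]
      exact (Polynomial.rootMultiplicity_pos hχne).2 ((hmemS u).1 hu).2
    · rw [Multiset.count_eq_zero_of_notMem hu]
      exact Nat.zero_le _
  have hPdvd : P ∣ χ := by
    have h1 : P = (S.val.map fun u => X - C u).prod := rfl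
    rw [h1]
    exact dvd_trans (Multiset.prod_dvd_prod_of_le (Multiset.map_le_map hSval))
      (prod_multiset_X_sub_C_dvd χ)
  obtain ⟨g, hχPg⟩ := hPdvd
  have hPne : P ≠ 0 := by
    rw [hPdef]
    exact Finset.prod_ne_zero_iff.2 fun u _ => X_sub_C_ne_zero u
  have hgne0 : g ≠ 0 := fun h => hχne (by rw [hχPg, h, mul_zero])
  -- g has no nonpositive roots
  have hgne : ∀ u : ℝ, u ≤ 0 → g.eval u ≠ 0 := by
    intro u hu hgu
    have hroot : χ.IsRoot u := by
      rw [Polynomial.IsRoot, hχPg, eval_mul, hgu, mul_zero]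
    rcases hu.lt_or_eq with hu' | rfl
    · have huS : u ∈ S := (hmemS u).2 ⟨hu', hroot⟩
      have hmult := (hgen u hu' hroot).1
      have hPr : P.IsRoot u := by
        rw [Polynomial.IsRoot, hPdef, eval_prod]
        exact Finset.prod_eq_zero huS (by simp)
      have h1 : 0 < P.rootMultiplicity u := (rootMultiplicity_pos hPne).2 hPr
      have h2 : 0 < g.rootMultiplicity u := (rootMultiplicity_pos hgne0).2 hgu
      rw [hχPg, Polynomial.rootMultiplicity_mul (by rw [← hχPg]; exact hχne)] at hmult
      omega
    · exact hns (by rw [← hχ0]; exact hroot)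
  have hPeval : ∀ a : ℝ, P.eval a = ∏ u ∈ S, (a - u) := by
    intro a; rw [hPdef, eval_prod]; simp
  -- a point far to the left where χ is positive
  have hq : ∃ a : ℝ, a < 0 ∧ (∀ u ∈ S, a < u) ∧ 0 < χ.eval a := by
    set q : ℝ[X] := χ.comp (-X) with hqdef
    have hnX : (-X : ℝ[X]).natDegree = 1 := by simp
    have hqlead : q.leadingCoeff = 1 := by
      rw [hqdef, leadingCoeff_comp (by rw [hnX]; norm_num), hlead, hdeg]
      have h1 : (-X : ℝ[X]).leadingCoeff = -1 := by simp
      rw [h1, ← mul_pow]; norm_num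
    have hqdeg : 0 < q.degree := by
      rw [← natDegree_pos_iff_degree_pos, hqdef, natDegree_comp, hdeg, hnX, mul_one]
      exact hm
    have ht := Polynomial.tendsto_atTop_of_leadingCoeff_nonneg q hqdeg (by rw [hqlead]; norm_num)
    have h1 : ∀ᶠ t : ℝ in Filter.atTop, 0 < q.eval t := ht.eventually_gt_atTop 0
    have h2 : ∀ᶠ t : ℝ in Filter.atTop, ∀ u ∈ S, -u < t := by
      rw [Filter.eventually_all_finset]
      intro u _; exact Filter.eventually_gt_atTop _
    have h3 : ∀ᶠ t : ℝ in Filter.atTop, 0 < t := Filter.eventually_gt_atTop 0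
    obtain ⟨t, ⟨ht1, ht2⟩, ht3⟩ := ((h1.and h2).and h3).exists
    rw [hqdef, eval_comp, eval_neg, eval_X] at ht1
    refine ⟨-t, by linarith, fun u hu => by have := ht2 u hu; linarith, ht1⟩
  obtain ⟨a, ha0, haS, haχ⟩ := hq
  have hPa : 0 < ε * P.eval a := by
    rw [hεdef, hPeval, hk]
    exact prod_neg_sign' (fun u hu => by have := haS u hu; linarith)
  have hχa' : 0 < P.eval a * g.eval a := by rw [← eval_mul, ← hχPg]; exact haχ
  have hga : 0 < ε * g.eval a := by
    rcases mul_pos_iff.1 hχa' with ⟨h1, h2⟩ | ⟨h1, h2⟩ <;>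
      rcases hε with h | h <;> rw [h] at hPa ⊢ <;> nlinarith
  -- constant sign of g on [a, 0]
  have hgsign : ∀ b : ℝ, a ≤ b → b ≤ 0 → 0 < ε * g.eval b := by
    intro b hab hb0
    have h1 : 0 < g.eval a * g.eval b :=
      no_root_mul_pos' hab (fun x hx _ => hgne x (le_trans hx.2 hb0) (by assumption))
    rcases hε with h | h <;> rw [h] at hga ⊢ <;> nlinarith
  -- the derivative at points of S
  have hderiv : ∀ u ∈ S, χ.derivative.eval u = (∏ v ∈ S.erase u, (u - v)) * g.eval u := by
    intro u hu
    have hP2 : P = (X - C u) * ∏ v ∈ S.erase u, (X - C v) :=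
      (Finset.mul_prod_erase S _ hu).symm
    set Q : ℝ[X] := ∏ v ∈ S.erase u, (X - C v) with hQdef
    have h1 : χ = (X - C u) * Q * g := by rw [hχPg, hP2]
    have h2 : χ.derivative =
        ((1 - 0) * Q + (X - C u) * Q.derivative) * g + (X - C u) * Q * g.derivative := by
      rw [h1, derivative_mul, derivative_mul, derivative_sub, derivative_X, derivative_C]
    rw [h2]
    simp only [eval_add, eval_mul, eval_sub, eval_X, eval_C, sub_self, zero_mul, mul_zero,
      add_zero, sub_zero, one_mul, zero_add]
    rw [hQdef, eval_prod]
    simp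
  -- sign of the derivative at each point of S
  have hsign : ∀ u ∈ S, Real.sign (χ.derivative.eval u) =
      ε * (-1) ^ (S.filter (fun v => u < v)).card := by
    intro u hu
    have hu0 : u < 0 := ((hmemS u).1 hu).1
    set c : ℕ := (S.filter (fun v => u < v)).card with hc
    have hεc : ((-1:ℝ)^c = 1 ∨ (-1:ℝ)^c = -1) := by
      rcases Nat.even_or_odd c with h | h
      exacts [Or.inl h.neg_one_pow, Or.inr h.neg_one_pow]
    have hA : 0 < (-1:ℝ)^c * ∏ v ∈ S.erase u, (u - v) := by
      rw [← Finset.prod_filter_mul_prod_filter_not (S.erase u) (fun v => u < v)]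
      have he1 : (S.erase u).filter (fun v => u < v) = S.filter (fun v => u < v) := by
        rw [Finset.filter_erase]
        exact Finset.erase_eq_of_notMem (by simp)
      have hpos2 : 0 < ∏ v ∈ (S.erase u).filter (fun v => ¬ u < v), (u - v) := by
        apply Finset.prod_pos
        intro v hv
        rw [Finset.mem_filter] at hv
        have hne : v ≠ u := Finset.ne_of_mem_erase hv.1
        have : v < u := lt_of_le_of_ne (not_lt.1 hv.2) hne
        linarith
      have hneg1 : 0 < (-1:ℝ)^c * ∏ v ∈ (S.erase u).filter (fun v => u < v), (u - v) := by
        rw [he1, hc]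
        exact prod_neg_sign' (fun v hv => by rw [Finset.mem_filter] at hv; linarith [hv.2])
      nlinarith [mul_pos hneg1 hpos2]
    have hB : 0 < ε * g.eval u := hgsign u (le_of_lt (haS u hu)) hu0.le
    have hprod : 0 < (ε * (-1:ℝ)^c) * χ.derivative.eval u := by
      rw [hderiv u hu]
      nlinarith [mul_pos hA hB]
    refine sign_eq_of_mul_pos' ?_ hprod
    rcases hε with h | h <;> rcases hεc with h' | h' <;> rw [h, h'] <;> norm_num
  -- summing the signs
  have hsum : ∑ u ∈ S, Real.sign (χ.derivative.eval u) = (ε - 1) / 2 := by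
    rw [Finset.sum_congr rfl hsign, ← Finset.mul_sum]
    have e := S.orderIsoOfFin hk.symm
    have hreindex : ∑ u ∈ S, (-1:ℝ)^((S.filter (fun v => u < v)).card) =
        ∑ i : Fin k, (-1:ℝ)^((S.filter (fun v => (e i : ℝ) < v)).card) := by
      rw [← Finset.sum_coe_sort S (fun u => (-1:ℝ)^((S.filter (fun v => u < v)).card))]
      exact (Equiv.sum_comp e.toEquiv
        (fun x : S => (-1:ℝ)^((S.filter (fun v => (x:ℝ) < v)).card))).symm
    have hcard : ∀ i : Fin k, (S.filter (fun v => (e i : ℝ) < v)).card = k - 1 - (i:ℕ) := by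
      intro i
      have hbij : (S.filter (fun v => (e i : ℝ) < v)).card = (Finset.Ioi i).card := by
        refine Finset.card_bij' (fun v hv => e.symm ⟨v, (Finset.mem_filter.1 hv).1⟩)
          (fun j _ => (e j : ℝ)) ?_ ?_ ?_ ?_
        · intro v hv
          rw [Finset.mem_Ioi]
          have h1 : e i < (⟨v, (Finset.mem_filter.1 hv).1⟩ : S) :=
            Subtype.mk_lt_mk.2 (Finset.mem_filter.1 hv).2
          have := e.symm.strictMono h1
          simpa using this
        · intro j hj
          rw [Finset.mem_filter]
          refine ⟨(e j).2, ?_⟩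
          exact Subtype.coe_lt_coe.2 (e.strictMono (Finset.mem_Ioi.1 hj))
        · intro v hv
          exact congrArg Subtype.val (e.apply_symm_apply _)
        · intro j hj
          exact e.symm_apply_apply j
      rw [hbij, Fin.card_Ioi]
    rw [hreindex, Finset.sum_congr rfl (fun i _ => by rw [hcard i])]
    rw [Fin.sum_univ_eq_sum_range (fun j => (-1:ℝ)^(k-1-j)) k,
      Finset.sum_range_reflect (fun j => (-1:ℝ)^j) k,
      geom_sum_eq (by norm_num : (-1:ℝ) ≠ 1) k, ← hεdef]
    rcases hε with h | h <;> rw [h] <;> norm_num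
  -- sign of the determinant
  have hdet : 0 < ε * D.det := by
    have hP0 : 0 < P.eval 0 := by
      rw [hPeval]
      apply Finset.prod_pos
      intro u hu
      have := ((hmemS u).1 hu).1
      linarith
    have hg0 : 0 < ε * g.eval 0 := hgsign 0 ha0.le le_rfl
    have h1 : D.det = P.eval 0 * g.eval 0 := by rw [← hχ0, hχPg, eval_mul]
    rw [h1]; nlinarith [mul_pos hP0 hg0]
  constructor
  · intro hDpos
    rw [hsum]
    rcases hε with h | h
    · rw [h]; norm_num
    · exfalso; rw [h] at hdet; linarith
  · intro hDneg
    rw [hsum]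
    rcases hε with h | h
    · exfalso; rw [h] at hdet; linarith
    · rw [h]; norm_num
end

section
/- Let c(i) = (i, i², ..., i^m) ∈ ℝ^m. Let k + ℓ = m with k ≥ ℓ, let s_0 < s_1 < ... < s_k and t_0 < t_1 < ... < t_ℓ be distinct parameters (with s_0 < t_0 if k = ℓ), and let σ = conv{c(s_0),...,c(s_k)} and τ = conv{c(t_0),...,c(t_ℓ)}. Then σ and τ intersect if and only if k = ⌈m/2⌉ and the vertices alternate along the moment curve: s_0 < t_0 < s_1 < t_1 < ... In this case the intersection is a single point and the signed intersection number is ℐ(σ,τ) = (−1)^{k(k−1)/2}. -/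
/-!
A common point of the two simplices is a pair of convex weights `a` on the `s i` and `b` on the
`t j` with `∑ a i * s i ^ d = ∑ b j * t j ^ d` for `d = 0, …, m`, i.e. a vector `(a, -b)` in the
kernel of the `(m + 1) × (m + 2)` Vandermonde system of all `m + 2` nodes. Pairing it with
Lagrange nodal polynomials of degree `m` shows that a nonzero kernel vector vanishes nowhere
(so the kernel is a line) and gives opposite signs to neighbouring nodes. Hence nonnegative
weights exist exactly when the `s i` and `t j` alternate, and they are then unique and positive.
Writing `p` in terms of the `s i` turns the orientation determinant into `a 0` times a
Vandermonde determinant, whose sign is `(-1)` to the number `k (k - 1) / 2` of its inverted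
pairs.
-/

open Finset Polynomial Function

section MomentKernel

variable {ι : Type*} [Fintype ι] {e w : ι → ℝ} {n : ℕ}

def momentKernel (e : ι → ℝ) (n : ℕ) : Submodule ℝ (ι → ℝ) :=
  LinearMap.ker (Matrix.of fun (d : Fin (n + 1)) x => e x ^ (d : ℕ)).mulVecLin

lemma mem_momentKernel : w ∈ momentKernel e n ↔ ∀ d ≤ n, ∑ x, w x * e x ^ d = 0 := by
  simp only [momentKernel, LinearMap.mem_ker, Matrix.mulVecLin_apply, funext_iff, Matrix.mulVec,
    dotProduct, Matrix.of_apply, Pi.zero_apply, mul_comm (e _ ^ _)]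
  exact ⟨fun h d hd => h ⟨d, by omega⟩, fun h d => h d (by omega)⟩

lemma momentKernel_ne_bot (hcard : n + 1 < Fintype.card ι) : momentKernel e n ≠ ⊥ :=
  LinearMap.ker_ne_bot_of_finrank_lt (by simpa using hcard)

lemma sum_mul_eval_eq_zero (hw : w ∈ momentKernel e n) {P : ℝ[X]} (hP : P.natDegree ≤ n) :
    ∑ x, w x * P.eval (e x) = 0 := by
  calc ∑ x, w x * P.eval (e x)
      = ∑ d ∈ range (P.natDegree + 1), P.coeff d * ∑ x, w x * e x ^ d := by
        simp_rw [eval_eq_sum_range, mul_sum]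
        rw [sum_comm]
        exact sum_congr rfl fun _ _ => sum_congr rfl fun _ _ => by ring
    _ = 0 := sum_eq_zero fun d hd => by
        rw [mem_momentKernel.1 hw d (by rw [mem_range] at hd; omega), mul_zero]

/-- The Lagrange nodal polynomial of all nodes but `x₀` and `u` isolates the weight at `u`. -/
lemma eq_zero_of_mem_momentKernel (he : Injective e) (hcard : Fintype.card ι ≤ n + 2)
    (hw : w ∈ momentKernel e n) {x₀ : ι} (hx₀ : w x₀ = 0) : w = 0 := by
  classical
  funext u
  by_cases hu : u = x₀
  · rw [hu, hx₀, Pi.zero_apply]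
  have hP := sum_mul_eval_eq_zero hw (P := Lagrange.nodal {x₀, u}ᶜ e) (by
    rw [Lagrange.natDegree_nodal, card_compl, card_pair (Ne.symm hu)]; omega)
  rw [Fintype.sum_eq_single u fun x hx => ?_] at hP
  · refine (mul_eq_zero.1 hP).resolve_right (Lagrange.eval_nodal_not_at_node fun z hz => ?_)
    simp only [mem_compl, mem_insert, mem_singleton, not_or] at hz
    exact he.ne (Ne.symm hz.2)
  · by_cases hx' : x = x₀
    · rw [hx', hx₀, zero_mul]
    · rw [Lagrange.eval_nodal_at_node (by simp [hx, hx']), mul_zero]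

lemma apply_ne_zero_of_mem_momentKernel (he : Injective e) (hcard : Fintype.card ι ≤ n + 2)
    (hw : w ∈ momentKernel e n) (hw0 : w ≠ 0) (x : ι) : w x ≠ 0 :=
  fun hx => hw0 (eq_zero_of_mem_momentKernel he hcard hw hx)

lemma exists_eq_smul_of_mem_momentKernel (he : Injective e) (hcard : Fintype.card ι ≤ n + 2)
    {w' : ι → ℝ} (hw : w ∈ momentKernel e n) (hw' : w' ∈ momentKernel e n) {x₀ : ι}
    (hx₀ : w x₀ ≠ 0) : ∃ c : ℝ, w' = c • w := by
  refine ⟨w' x₀ / w x₀, sub_eq_zero.1 (eq_zero_of_mem_momentKernel he hcard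
    (sub_mem hw' (Submodule.smul_mem _ _ hw)) (x₀ := x₀) ?_)⟩
  simp [div_mul_cancel₀ _ hx₀]

/-- The nodal polynomial of all other nodes has the same sign at the neighbours `e x`, `e y`. -/
lemma mul_neg_of_forall_not_between (he : Injective e) (hcard : Fintype.card ι ≤ n + 2)
    (hw : w ∈ momentKernel e n) (hw0 : w ≠ 0) {x y : ι} (hxy : e x < e y)
    (hbetween : ∀ z, ¬(e x < e z ∧ e z < e y)) : w x * w y < 0 := by
  classical
  have hne : x ≠ y := fun h => hxy.ne (congrArg e h)
  set P := Lagrange.nodal {x, y}ᶜ e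
  have hsum := sum_mul_eval_eq_zero hw (P := P) (by
    rw [Lagrange.natDegree_nodal, card_compl, card_pair hne]; omega)
  rw [Fintype.sum_eq_add x y hne fun z hz => by
    rw [Lagrange.eval_nodal_at_node (by simp [hz.1, hz.2]), mul_zero]] at hsum
  have hPP : 0 < P.eval (e x) * P.eval (e y) := by
    simp only [P, Lagrange.eval_nodal, ← prod_mul_distrib]
    refine prod_pos fun z hz => ?_
    simp only [mem_compl, mem_insert, mem_singleton, not_or] at hz
    have hzx : e z ≠ e x := he.ne hz.1
    have hzy : e z ≠ e y := he.ne hz.2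
    rcases lt_or_gt_of_ne hzx with h | h
    · exact mul_pos (by linarith) (by linarith)
    · have : e y < e z := lt_of_le_of_ne (not_lt.1 fun h' => hbetween z ⟨h, h'⟩) hzy.symm
      exact mul_pos_of_neg_of_neg (by linarith) (by linarith)
  have hprod : w x * w y * (P.eval (e x) * P.eval (e y)) = -(w y * P.eval (e y)) ^ 2 := by
    linear_combination (w y * P.eval (e y)) * hsum
  refine lt_of_le_of_ne (nonpos_of_mul_nonpos_left ?_ hPP) (mul_ne_zero
    (apply_ne_zero_of_mem_momentKernel he hcard hw hw0 x)
    (apply_ne_zero_of_mem_momentKernel he hcard hw hw0 y))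
  rw [hprod]
  exact neg_nonpos.2 (sq_nonneg _)

end MomentKernel

lemma Monotone.lt_card_filter_lt_iff {α : Type*} [LinearOrder α] {n : ℕ} {f : Fin n → α}
    (hf : Monotone f) (x : α) (j : Fin n) : (j : ℕ) < #{i | f i < x} ↔ f j < x := by
  constructor
  · intro hj
    by_contra! hx
    have hsub : ({i | f i < x} : Finset _) ⊆ Iio j := fun i hi => by
      simp only [mem_filter, mem_univ, true_and] at hi
      exact mem_Iio.2 (lt_of_not_ge fun hji => (hx.trans (hf hji)).not_gt hi)
    have := card_le_card hsub
    rw [Fin.card_Iio] at this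
    omega
  · intro hx
    have hsub : Iic j ⊆ ({i | f i < x} : Finset _) := fun i hi => by
      simp only [mem_filter, mem_univ, true_and]
      exact (hf (mem_Iic.1 hi)).trans_lt hx
    have := card_le_card hsub
    rw [Fin.card_Iic] at this
    omega

lemma card_filter_lt_lt_of_lt_of_lt {κ α : Type*} [Fintype κ] [LinearOrder α] {f : κ → α}
    {x y : α} {j : κ} (hxj : x < f j) (hjy : f j < y) : #{i | f i < x} < #{i | f i < y} := by
  refine card_lt_card ((ssubset_iff_of_subset fun i hi => ?_).2 ⟨j, ?_, ?_⟩)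
  · simp only [mem_filter, mem_univ, true_and] at hi ⊢
    exact hi.trans (hxj.trans hjy)
  · simpa using hjy
  · simpa using hxj.le

lemma add_le_of_forall_lt_succ {n : ℕ} {f : Fin (n + 1) → ℕ}
    (hf : ∀ i : Fin n, f i.castSucc < f i.succ) (i : Fin (n + 1)) : f 0 + i ≤ f i := by
  induction i using Fin.induction with
  | zero => simp
  | succ i ih =>
    have := hf i
    simp only [Fin.val_succ, Fin.val_castSucc] at ih ⊢
    omega

lemma neg_one_pow_card_filter_neg_mul_prod_pos {κ : Type*} (A : Finset κ) {f : κ → ℝ}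
    (hf : ∀ x ∈ A, f x ≠ 0) : 0 < (-1 : ℝ) ^ #{x ∈ A | f x < 0} * ∏ x ∈ A, f x := by
  have hsign : (-1 : ℝ) ^ #{x ∈ A | f x < 0} = ∏ x ∈ A, if f x < 0 then -1 else 1 := by
    rw [prod_ite, prod_const, prod_const_one, mul_one]
  rw [hsign, ← prod_mul_distrib]
  refine prod_pos fun x hx => ?_
  rcases lt_or_gt_of_ne (hf x hx) with h | h
  · simp [h]
  · simpa [h.not_gt] using h

lemma Real.sign_eq_neg_one_pow_of_pos {x : ℝ} {n : ℕ} (h : 0 < (-1) ^ n * x) :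
    Real.sign x = (-1) ^ n := by
  rcases neg_one_pow_eq_or ℝ n with hn | hn <;> rw [hn] at h ⊢
  · exact Real.sign_of_pos (by linarith)
  · exact Real.sign_of_neg (by linarith)

lemma det_eq_mul_det_vandermonde {n : ℕ} {M : Matrix (Fin n) (Fin n) ℝ} {v c : Fin n → ℝ}
    (j₀ : Fin n) (hM₀ : ∀ i, M i j₀ = ∑ r, c r * v r ^ (i : ℕ))
    (hM : ∀ i j, j ≠ j₀ → M i j = v j ^ (i : ℕ)) :
    M.det = c j₀ * (Matrix.vandermonde v).det := by
  rw [← Matrix.det_transpose, ← smul_eq_mul, ← Matrix.det_updateRow_sum]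
  congr 1
  ext j i
  by_cases hj : j = j₀
  · subst hj
    simp [hM₀, Finset.sum_apply, Matrix.vandermonde_apply]
  · simp [Matrix.updateRow_ne hj, hM i j hj]

lemma mem_convexHull_range_iff {κ E : Type*} [Fintype κ] [AddCommGroup E] [Module ℝ E]
    {f : κ → E} {x : E} :
    x ∈ convexHull ℝ (Set.range f) ↔ ∃ a ∈ stdSimplex ℝ κ, ∑ i, a i • f i = x := by
  classical
  have hf : Set.range f = Fintype.linearCombination ℝ f '' Set.range fun i => Pi.single i 1 := by
    rw [← Set.range_comp]
    congr 1
    funext i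
    simp
  rw [hf, ← LinearMap.image_convexHull, convexHull_rangle_single_eq_stdSimplex]
  simp [Fintype.linearCombination_apply]

def momentCurve (m : ℕ) (x : ℝ) : Fin m → ℝ := fun i => x ^ ((i : ℕ) + 1)

lemma cons_one_momentCurve (m : ℕ) (x : ℝ) :
    (Fin.cons 1 (momentCurve m x) : Fin (m + 1) → ℝ) = fun i : Fin (m + 1) => x ^ (i : ℕ) := by
  funext i
  cases i using Fin.cases <;> simp [momentCurve]

section MomentCurve

variable {σ τ : Type*} [Fintype σ] [Fintype τ] {m : ℕ} {s : σ → ℝ} {t : τ → ℝ}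

lemma sumElim_neg_mem_momentKernel_iff {a : σ → ℝ} {b : τ → ℝ} (hab : ∑ i, a i = ∑ j, b j) :
    Sum.elim a (-b) ∈ momentKernel (Sum.elim s t) m ↔
      ∑ i, a i • momentCurve m (s i) = ∑ j, b j • momentCurve m (t j) := by
  simp only [mem_momentKernel, funext_iff, Fintype.sum_sum_type, Sum.elim_inl, Sum.elim_inr,
    Pi.neg_apply, neg_mul, sum_neg_distrib, ← sub_eq_add_neg, sub_eq_zero, Finset.sum_apply,
    Pi.smul_apply, smul_eq_mul, momentCurve]
  refine ⟨fun h d => h (d + 1) d.isLt, fun h d hd => ?_⟩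
  cases d with
  | zero => simpa using hab
  | succ d => exact h ⟨d, hd⟩

lemma mem_inter_convexHull_momentCurve_iff {p : Fin m → ℝ} :
    p ∈ convexHull ℝ (Set.range fun i => momentCurve m (s i)) ∩
        convexHull ℝ (Set.range fun j => momentCurve m (t j)) ↔
      ∃ a ∈ stdSimplex ℝ σ, ∃ b ∈ stdSimplex ℝ τ,
        Sum.elim a (-b) ∈ momentKernel (Sum.elim s t) m ∧ ∑ i, a i • momentCurve m (s i) = p := by
  simp only [Set.mem_inter_iff, mem_convexHull_range_iff]
  constructor
  · rintro ⟨⟨a, ha, rfl⟩, b, hb, hbp⟩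
    exact ⟨a, ha, b, hb, (sumElim_neg_mem_momentKernel_iff (ha.2.trans hb.2.symm)).2 hbp.symm, rfl⟩
  · rintro ⟨a, ha, b, hb, hw, rfl⟩
    exact ⟨⟨a, ha, rfl⟩, b, hb,
      ((sumElim_neg_mem_momentKernel_iff (ha.2.trans hb.2.symm)).1 hw).symm⟩

end MomentCurve

section TwoSimplices

variable {k l : ℕ} {s : Fin (k + 1) → ℝ} {t : Fin (l + 1) → ℝ}

/-- `s 0 < t 0 < s 1 < t 1 < ⋯` -/
def Interlace (s : Fin (k + 1) → ℝ) (t : Fin (l + 1) → ℝ) : Prop :=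
  ∀ i j, s i < t j ↔ (i : ℕ) ≤ j

/-- Counting the `t`s below each `s` (and vice versa): each gap between consecutive `s`s
contains a `t`, so `#{j | t j < s i} ≥ i`, which forces `t j < s i` for `j < i`. -/
lemma interlace_of_separated (hs : Monotone s) (ht : Monotone t) (hst : ∀ i j, s i ≠ t j)
    (hlk : l ≤ k) (h0 : k = l → s 0 < t 0)
    (hsep_s : ∀ i : Fin k, ∃ j, s i.castSucc < t j ∧ t j < s i.succ)
    (hsep_t : ∀ j : Fin l, ∃ i, t j.castSucc < s i ∧ s i < t j.succ) :
    k ≤ l + 1 ∧ Interlace s t := by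
  have hf := add_le_of_forall_lt_succ (f := fun i => #{j | t j < s i})
    fun i => (hsep_s i).elim fun _ hj => card_filter_lt_lt_of_lt_of_lt hj.1 hj.2
  have hg := add_le_of_forall_lt_succ (f := fun j => #{i | s i < t j})
    fun j => (hsep_t j).elim fun _ hi => card_filter_lt_lt_of_lt_of_lt hi.1 hi.2
  have hfk : #{j | t j < s 0} + k ≤ l + 1 :=
    (hf (Fin.last k)).trans ((card_filter_le _ _).trans (by simp))
  have hst0 : s 0 < t 0 := by
    by_contra! h
    have := (ht.lt_card_filter_lt_iff (s 0) 0).2 (lt_of_le_of_ne h (hst 0 0).symm)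
    exact (h0 (by simp only [Fin.val_zero] at this; omega)).not_ge h
  have hg0 := (hs.lt_card_filter_lt_iff (t 0) 0).2 hst0
  refine ⟨by omega, fun i j => ⟨fun h => ?_, fun h => ?_⟩⟩
  · by_contra! hji
    have := hf i
    exact ((ht.lt_card_filter_lt_iff (s i) j).1 (by omega)).not_gt h
  · have := hg j
    exact (hs.lt_card_filter_lt_iff (t j) i).1 (by omega)

lemma Interlace.lt_iff (hI : Interlace s t) (hst : ∀ i j, s i ≠ t j) (i : Fin (k + 1))
    (j : Fin (l + 1)) : t j < s i ↔ (j : ℕ) < i := by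
  rw [← Nat.not_le, ← hI]
  exact ⟨fun h => h.not_gt, fun h => lt_of_le_of_ne (not_lt.1 h) (hst i j).symm⟩

lemma interlace_iff (hs : Monotone s) (hst : ∀ i j, s i ≠ t j) (hlk : l ≤ k) :
    Interlace s t ↔ (∀ j : Fin (l + 1), s ⟨j, by omega⟩ < t j) ∧
      ∀ j : Fin (l + 1), ∀ hj : (j : ℕ) + 1 < k + 1, t j < s ⟨j + 1, hj⟩ := by
  refine ⟨fun hI => ⟨fun j => (hI _ j).2 le_rfl, fun j hj => ?_⟩, fun ⟨h1, h2⟩ i j => ⟨?_, ?_⟩⟩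
  · exact lt_of_le_of_ne (not_lt.1 fun h => by simpa using (hI _ j).1 h) (hst _ j).symm
  · intro h
    by_contra! hji
    exact ((h2 j (by omega)).trans_le (hs (Fin.mk_le_mk.2 (by omega)))).not_gt h
  · intro hij
    exact (hs (Fin.mk_le_mk.2 hij)).trans_lt (h1 j)

lemma card_sum_fin_le : Fintype.card (Fin (k + 1) ⊕ Fin (l + 1)) ≤ k + l + 2 := by
  simp only [Fintype.card_sum, Fintype.card_fin]; omega

lemma pos_of_nonneg_of_mem_momentKernel {a : Fin (k + 1) → ℝ} {b : Fin (l + 1) → ℝ}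
    (hinj : Injective (Sum.elim s t)) (ha : ∀ i, 0 ≤ a i) (hb : ∀ j, 0 ≤ b j) (ha1 : ∑ i, a i = 1)
    (hw : Sum.elim a (-b) ∈ momentKernel (Sum.elim s t) (k + l)) :
    (∀ i, 0 < a i) ∧ ∀ j, 0 < b j := by
  have hw0 : Sum.elim a (-b) ≠ 0 := fun h => by
    simp [show a = 0 from funext fun i => congrFun h (.inl i)] at ha1
  have hne := apply_ne_zero_of_mem_momentKernel hinj card_sum_fin_le hw hw0
  exact ⟨fun i => lt_of_le_of_ne (ha i) (hne (.inl i)).symm,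
    fun j => lt_of_le_of_ne (hb j) fun h => hne (.inr j) (by simp [← h])⟩

lemma separated_of_mem_momentKernel {a : Fin (k + 1) → ℝ} {b : Fin (l + 1) → ℝ}
    (hs : StrictMono s) (ht : StrictMono t) (hinj : Injective (Sum.elim s t))
    (ha : ∀ i, 0 < a i) (hb : ∀ j, 0 < b j)
    (hw : Sum.elim a (-b) ∈ momentKernel (Sum.elim s t) (k + l)) :
    (∀ i : Fin k, ∃ j, s i.castSucc < t j ∧ t j < s i.succ) ∧
      ∀ j : Fin l, ∃ i, t j.castSucc < s i ∧ s i < t j.succ := by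
  have hw0 : Sum.elim a (-b) ≠ 0 := fun h => (ha 0).ne' (congrFun h (.inl 0))
  have hneg := fun x y => mul_neg_of_forall_not_between (x := x) (y := y) hinj card_sum_fin_le
    hw hw0
  constructor
  · intro i
    by_contra! h
    refine (hneg (.inl i.castSucc) (.inl i.succ) (hs i.castSucc_lt_succ) ?_).not_ge
      (mul_pos (ha _) (ha _)).le
    rintro (i' | j) ⟨h1, h2⟩
    · simp only [Sum.elim_inl, hs.lt_iff_lt] at h1 h2
      exact (Fin.castSucc_lt_iff_succ_le.1 h1).not_gt h2
    · exact (h j h1).not_gt h2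
  · intro j
    by_contra! h
    refine (hneg (.inr j.castSucc) (.inr j.succ) (ht j.castSucc_lt_succ) ?_).not_ge
      (by simpa using (mul_pos (hb _) (hb _)).le)
    rintro (i | j') ⟨h1, h2⟩
    · exact (h i h1).not_gt h2
    · simp only [Sum.elim_inr, ht.lt_iff_lt] at h1 h2
      exact (Fin.castSucc_lt_iff_succ_le.1 h1).not_gt h2

/-- The neighbours `s i, t i` and `t j, s (j + 1)` carry weights of opposite signs. -/
lemma Interlace.sign_of_mem_momentKernel (hI : Interlace s t) (hs : StrictMono s)
    (ht : StrictMono t) (hst : ∀ i j, s i ≠ t j) (hlk : l ≤ k) (hkl : k ≤ l + 1)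
    {u : Fin (k + 1) ⊕ Fin (l + 1) → ℝ} (hu : u ∈ momentKernel (Sum.elim s t) (k + l))
    (hu0 : 0 < u (.inl 0)) : (∀ i, 0 < u (.inl i)) ∧ ∀ j, u (.inr j) < 0 := by
  have hinj : Injective (Sum.elim s t) := hs.injective.sumElim ht.injective hst
  have hneg := fun x y => mul_neg_of_forall_not_between (x := x) (y := y) hinj card_sum_fin_le
    hu fun h => by simp [h] at hu0
  have hsign_st (i : Fin (k + 1)) (j : Fin (l + 1)) (hij : (i : ℕ) = j) :
      u (.inl i) * u (.inr j) < 0 := by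
    refine hneg _ _ ((hI i j).2 hij.le) ?_
    rintro (i' | j') ⟨h1, h2⟩ <;> simp only [Sum.elim_inl, Sum.elim_inr] at h1 h2
    · have := (hI i' j).1 h2
      rw [hs.lt_iff_lt, Fin.lt_def] at h1
      omega
    · have := (hI i j').1 h1
      rw [ht.lt_iff_lt, Fin.lt_def] at h2
      omega
  have hsign_ts (j : Fin (l + 1)) (i : Fin (k + 1)) (hij : (i : ℕ) = j + 1) :
      u (.inr j) * u (.inl i) < 0 := by
    refine hneg _ _ ((hI.lt_iff hst i j).2 (by omega)) ?_
    rintro (i' | j') ⟨h1, h2⟩ <;> simp only [Sum.elim_inl, Sum.elim_inr] at h1 h2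
    · have : ¬ (i' : ℕ) ≤ j := fun h => ((hI i' j).2 h).not_gt h1
      rw [hs.lt_iff_lt, Fin.lt_def] at h2
      omega
    · have : ¬ (i : ℕ) ≤ j' := fun h => ((hI i j').2 h).not_gt h2
      rw [ht.lt_iff_lt, Fin.lt_def] at h1
      omega
  have hpos (i : Fin (k + 1)) : 0 < u (.inl i) := by
    induction i using Fin.induction with
    | zero => exact hu0
    | succ i ih =>
      have := neg_of_mul_neg_right (hsign_st _ ⟨i, by omega⟩ rfl) ih.le
      exact pos_of_mul_neg_right (hsign_ts _ _ (by simp)) this.le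
  exact ⟨hpos, fun j => neg_of_mul_neg_right (hsign_st ⟨j, by omega⟩ j rfl) (hpos _).le⟩

lemma Interlace.exists_mem_momentKernel (hI : Interlace s t) (hs : StrictMono s)
    (ht : StrictMono t) (hst : ∀ i j, s i ≠ t j) (hlk : l ≤ k) (hkl : k ≤ l + 1) :
    ∃ a b, (∀ i, 0 ≤ a i) ∧ (∀ j, 0 ≤ b j) ∧ ∑ i, a i = 1 ∧ ∑ j, b j = 1 ∧
      Sum.elim a (-b) ∈ momentKernel (Sum.elim s t) (k + l) := by
  obtain ⟨w, hw, hw0⟩ := Submodule.exists_mem_ne_zero_of_ne_bot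
    (momentKernel_ne_bot (e := Sum.elim s t) (n := k + l) (by simp; omega))
  have hw00 := apply_ne_zero_of_mem_momentKernel (hs.injective.sumElim ht.injective hst)
    card_sum_fin_le hw hw0 (.inl 0)
  set u := (w (.inl 0))⁻¹ • w
  have hu : u ∈ momentKernel (Sum.elim s t) (k + l) := Submodule.smul_mem _ _ hw
  obtain ⟨hpos, hneg⟩ := hI.sign_of_mem_momentKernel hs ht hst hlk hkl hu (by simp [u, hw00])
  set S := ∑ i, u (.inl i)
  have hS : 0 < S := sum_pos (fun i _ => hpos i) univ_nonempty
  have hsum : ∑ j, u (.inr j) = -S := by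
    have := mem_momentKernel.1 hu 0 (Nat.zero_le _)
    simp only [pow_zero, mul_one, Fintype.sum_sum_type] at this
    linarith
  refine ⟨fun i => u (.inl i) / S, fun j => -u (.inr j) / S, fun i => (div_pos (hpos i) hS).le,
    fun j => (div_pos (neg_pos.2 (hneg j)) hS).le, ?_, ?_, ?_⟩
  · rw [← sum_div, div_self hS.ne']
  · rw [← sum_div, sum_neg_distrib, hsum, neg_neg, div_self hS.ne']
  · convert Submodule.smul_mem _ S⁻¹ hu using 1
    funext x
    cases x <;> simp [div_eq_inv_mul]

lemma eq_of_mem_momentKernel {a a' : Fin (k + 1) → ℝ} {b b' : Fin (l + 1) → ℝ}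
    (hinj : Injective (Sum.elim s t))
    (hw : Sum.elim a (-b) ∈ momentKernel (Sum.elim s t) (k + l))
    (hw' : Sum.elim a' (-b') ∈ momentKernel (Sum.elim s t) (k + l))
    (ha : ∑ i, a i = 1) (ha' : ∑ i, a' i = 1) : a' = a := by
  have hw0 : Sum.elim a (-b) ≠ 0 := fun h => by
    simp [show a = 0 from funext fun i => congrFun h (.inl i)] at ha
  obtain ⟨c, hc⟩ := exists_eq_smul_of_mem_momentKernel hinj card_sum_fin_le hw hw'
    (apply_ne_zero_of_mem_momentKernel hinj card_sum_fin_le hw hw0 (.inl 0))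
  have hac : a' = c • a := funext fun i => congrFun hc (.inl i)
  have hc1 : c = 1 := by simpa [hac, ← mul_sum, ha] using ha'
  rw [hac, hc1, one_smul]

lemma interlace_of_mem_inter (hs : StrictMono s) (ht : StrictMono t) (hst : ∀ i j, s i ≠ t j)
    (hlk : l ≤ k) (h0 : k = l → s 0 < t 0) {p : Fin (k + l) → ℝ}
    (hp : p ∈ convexHull ℝ (Set.range fun i => momentCurve (k + l) (s i)) ∩
      convexHull ℝ (Set.range fun j => momentCurve (k + l) (t j))) :
    k ≤ l + 1 ∧ Interlace s t := by
  obtain ⟨a, ha, b, hb, hw, -⟩ := mem_inter_convexHull_momentCurve_iff.1 hp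
  have hinj : Injective (Sum.elim s t) := hs.injective.sumElim ht.injective hst
  obtain ⟨ha', hb'⟩ := pos_of_nonneg_of_mem_momentKernel hinj ha.1 hb.1 ha.2 hw
  obtain ⟨hsep_s, hsep_t⟩ := separated_of_mem_momentKernel hs ht hinj ha' hb' hw
  exact interlace_of_separated hs.monotone ht.monotone hst hlk h0 hsep_s hsep_t

/-- `s 0, …, s k, t 1, …, t l`: the nodes of the orientation determinant of the intersection
number. -/
def orientationNodes (s : Fin (k + 1) → ℝ) (t : Fin (l + 1) → ℝ) (r : Fin (k + l + 1)) : ℝ :=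
  if h : (r : ℕ) < k + 1 then s ⟨r, h⟩ else t ⟨r - k, by omega⟩

lemma sum_dite_mul_orientationNodes_pow (a : Fin (k + 1) → ℝ) (d : ℕ) :
    ∑ r : Fin (k + l + 1), (if h : (r : ℕ) < k + 1 then a ⟨r, h⟩ else 0) *
      orientationNodes s t r ^ d = ∑ i, a i * s i ^ d := by
  refine (Fintype.sum_of_injective (Fin.castLE (by omega)) (Fin.castLE_injective _) _ _
    (fun r hr => ?_) fun i => by simp [orientationNodes, i.isLt]).symm
  rw [dif_neg fun h => hr ⟨⟨r, h⟩, rfl⟩, zero_mul]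

lemma orientationNodes_injective (hs : StrictMono s) (ht : StrictMono t)
    (hst : ∀ i j, s i ≠ t j) : Injective (orientationNodes s t) := by
  intro r r' h
  unfold orientationNodes at h
  split_ifs at h with hr hr'
  · simpa [Fin.ext_iff] using hs.injective h
  · exact absurd h (hst _ _)
  · exact absurd h.symm (hst _ _)
  · have := congrArg Fin.val (ht.injective h)
    simp only at this
    exact Fin.ext (by omega)

lemma card_inversions_orientationNodes (hs : StrictMono s) (ht : StrictMono t)
    (hst : ∀ i j, s i ≠ t j) (hkl : k ≤ l + 1) (hI : Interlace s t) (r : Fin (k + l + 1)) :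
    #{j ∈ Ioi r | orientationNodes s t j - orientationNodes s t r < 0} =
      if (r : ℕ) < k + 1 then (r : ℕ) - 1 else 0 := by
  by_cases hr : (r : ℕ) < k + 1
  · rw [if_pos hr]
    have hfilter : {j ∈ Ioi r | orientationNodes s t j - orientationNodes s t r < 0} =
        Ioc (⟨k, by omega⟩ : Fin (k + l + 1)) ⟨k + r - 1, by omega⟩ := by
      ext j
      simp only [mem_filter, mem_Ioi, mem_Ioc, Fin.lt_def, Fin.le_def, sub_neg, orientationNodes,
        dif_pos hr]
      split_ifs with hj
      · simp only [hs.lt_iff_lt, Fin.lt_def]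
        omega
      · rw [hI.lt_iff hst]
        simp only
        omega
    rw [hfilter, Fin.card_Ioc]
    simp only
    omega
  · rw [if_neg hr, card_eq_zero, filter_eq_empty_iff]
    intro j hj
    rw [mem_Ioi, Fin.lt_def] at hj
    simp only [orientationNodes, dif_neg hr, dif_neg (show ¬ (j : ℕ) < k + 1 by omega), sub_neg,
      not_lt]
    exact ht.monotone (Fin.mk_le_mk.2 (by omega))

lemma neg_one_pow_mul_det_vandermonde_orientationNodes_pos (hs : StrictMono s)
    (ht : StrictMono t) (hst : ∀ i j, s i ≠ t j) (hkl : k ≤ l + 1) (hI : Interlace s t) :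
    0 < (-1 : ℝ) ^ (k * (k - 1) / 2) * (Matrix.vandermonde (orientationNodes s t)).det := by
  have hrows := prod_pos fun r (_ : r ∈ univ) => neg_one_pow_card_filter_neg_mul_prod_pos (Ioi r)
    fun j hj => sub_ne_zero.2 ((orientationNodes_injective hs ht hst).ne (mem_Ioi.1 hj).ne')
  rw [prod_mul_distrib, prod_pow_eq_pow_sum, ← Matrix.det_vandermonde] at hrows
  simp_rw [card_inversions_orientationNodes hs ht hst hkl hI] at hrows
  have hexp : ∑ r : Fin (k + l + 1), (if (r : ℕ) < k + 1 then (r : ℕ) - 1 else 0) =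
      k * (k - 1) / 2 := by
    rw [Fin.sum_univ_eq_sum_range (fun r => if r < k + 1 then r - 1 else 0),
      show k + l + 1 = k + 1 + l by omega, sum_range_add, sum_range_succ', ← sum_range_id]
    simp +contextual [sum_ite_of_true]
    omega
  rwa [hexp] at hrows

end TwoSimplices

/-- Two simplices `σ = conv{c(s_0),…,c(s_k)}` and `τ = conv{c(t_0),…,c(t_ℓ)}` of
complementary dimensions `k + ℓ = m`, `k ≥ ℓ`, spanned by points of the moment curve
`c(x) = (x, …, x^m)` intersect iff `k = ⌈m/2⌉` and the vertices alternate along the curve;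
in that case they meet in a single point `p`, and the signed intersection number, i.e. the
sign of `det((1,p),(1,c(s_1)),…,(1,c(s_k)),(1,c(t_1)),…,(1,c(t_ℓ)))`, equals
`(−1)^{k(k−1)/2}`. -/
theorem stmt7 (m k l : ℕ) (hm : k + l = m) (hlk : l ≤ k)
    (c : ℝ → Fin m → ℝ)
    (hc : ∀ (x : ℝ) (i : Fin m), c x i = x ^ ((i : ℕ) + 1))
    (s : Fin (k + 1) → ℝ) (t : Fin (l + 1) → ℝ)
    (hs : StrictMono s) (ht : StrictMono t)
    (hall : ∀ i j, s i ≠ t j)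
    (heq0 : k = l → s 0 < t 0) :
    (((convexHull ℝ (Set.range fun i => c (s i))) ∩
        (convexHull ℝ (Set.range fun j => c (t j)))).Nonempty ↔
      (k = (m + 1) / 2 ∧
        (∀ j : Fin (l + 1), s ⟨(j : ℕ), by have := j.isLt; omega⟩ < t j) ∧
        (∀ j : Fin (l + 1), ∀ hj : (j : ℕ) + 1 < k + 1, t j < s ⟨(j : ℕ) + 1, hj⟩))) ∧
    ∀ p ∈ (convexHull ℝ (Set.range fun i => c (s i))) ∩
        (convexHull ℝ (Set.range fun j => c (t j))),
      ((convexHull ℝ (Set.range fun i => c (s i))) ∩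
        (convexHull ℝ (Set.range fun j => c (t j)))) = {p} ∧
      Real.sign (Matrix.det (Matrix.of fun (i j2 : Fin (m + 1)) =>
        (if (j2 : ℕ) = 0 then Fin.cons (1 : ℝ) p
         else if hj : (j2 : ℕ) < k + 1 then Fin.cons (1 : ℝ) (c (s ⟨(j2 : ℕ), hj⟩))
         else Fin.cons (1 : ℝ) (c (t ⟨(j2 : ℕ) - k, by have := j2.isLt; omega⟩)) :
           Fin (m + 1) → ℝ) i))
        = (-1 : ℝ) ^ (k * (k - 1) / 2) := by
  subst hm
  obtain rfl : c = momentCurve (k + l) := funext fun x => funext (hc x)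
  have hinj : Injective (Sum.elim s t) := hs.injective.sumElim ht.injective hall
  have halt := interlace_iff hs.monotone hall hlk
  refine ⟨⟨fun ⟨p, hp⟩ => ?_, fun ⟨hk, hI⟩ => ?_⟩, fun p hp => ⟨?_, ?_⟩⟩
  · obtain ⟨hkl, hI⟩ := interlace_of_mem_inter hs ht hall hlk heq0 hp
    exact ⟨by omega, halt.1 hI⟩
  · obtain ⟨a, b, ha, hb, ha1, hb1, hw⟩ :=
      (halt.2 hI).exists_mem_momentKernel hs ht hall hlk (by omega)
    exact ⟨_, mem_inter_convexHull_momentCurve_iff.2 ⟨a, ⟨ha, ha1⟩, b, ⟨hb, hb1⟩, hw, rfl⟩⟩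
  · refine Set.eq_singleton_iff_unique_mem.2 ⟨hp, fun q hq => ?_⟩
    obtain ⟨a, ha, b, -, hw, rfl⟩ := mem_inter_convexHull_momentCurve_iff.1 hp
    obtain ⟨a', ha', b', -, hw', rfl⟩ := mem_inter_convexHull_momentCurve_iff.1 hq
    rw [eq_of_mem_momentKernel hinj hw hw' ha.2 ha'.2]
  · obtain ⟨hkl, hI⟩ := interlace_of_mem_inter hs ht hall hlk heq0 hp
    obtain ⟨a, ha, b, hb, hw, rfl⟩ := mem_inter_convexHull_momentCurve_iff.1 hp
    have ha0 := (pos_of_nonneg_of_mem_momentKernel hinj ha.1 hb.1 ha.2 hw).1 0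
    rw [det_eq_mul_det_vandermonde (v := orientationNodes s t)
      (c := fun r => if h : (r : ℕ) < k + 1 then a ⟨r, h⟩ else 0) 0 (fun i => ?_) fun i j hj => ?_]
    · refine Real.sign_eq_neg_one_pow_of_pos ?_
      simpa [mul_left_comm] using mul_pos ha0
        (neg_one_pow_mul_det_vandermonde_orientationNodes_pos hs ht hall hkl hI)
    · rw [sum_dite_mul_orientationNodes_pow]
      cases i using Fin.cases <;> simp [ha.2, Finset.sum_apply, momentCurve]
    · have hj' : (j : ℕ) ≠ 0 := fun h => hj (Fin.ext h)
      simp only [Matrix.of_apply, if_neg hj', cons_one_momentCurve, orientationNodes]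
      split_ifs <;> rfl
end

section
/- Let σ and τ be affine simplices in ℝ^m of dimensions k and ℓ with k + ℓ = m, whose combined vertex set of m+2 points is in general position (any m+1 affinely independent), oriented by the increasing order of their vertex indices. Then σ ∩ τ is either empty or a single point, and hence the intersection number satisfies |ℐ(σ,τ)| ≤ 1. -/
/-! Write a common point of the two simplices as `∑ aᵢ σᵢ = ∑ cⱼ τⱼ` with `∑ a = ∑ c = 1`;
then `(a, -c)` is an affine dependence of the `m + 2` vertices. As any `m + 1` of them are
affinely independent, a dependence vanishing at one vertex vanishes identically, so all
dependences are proportional to one that does not vanish at a fixed vertex. Two common points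
thus give proportional dependences whose `σ`-parts both sum to `1`; they are equal, and so are
the points. The argument only uses affine combinations, so it bounds the intersection of the
affine spans. -/

open Classical in
/-- The signed intersection number of two affine simplices of dimensions `k` and `ℓ` in `ℝ^m`
(given by their vertex tuples, oriented by increasing index order): it is `0` if the convex
hulls are disjoint, and otherwise the sign of the determinant
`det((1,p),(1,σ_1),…,(1,σ_k),(1,τ_1),…,(1,τ_ℓ))` where `p` is an intersection point. -/
noncomputable def simplexInter {m k l : ℕ} (σv : Fin (k + 1) → Fin m → ℝ)
    (τv : Fin (l + 1) → Fin m → ℝ) : ℝ :=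
  if h : ((convexHull ℝ (Set.range σv)) ∩ (convexHull ℝ (Set.range τv))).Nonempty then
    Real.sign (Matrix.det (Matrix.of fun (i j : Fin (m + 1)) =>
      (if (j : ℕ) = 0 then Fin.cons (1 : ℝ) h.some
       else if hj : (j : ℕ) < k + 1 then Fin.cons (1 : ℝ) (σv ⟨(j : ℕ), hj⟩)
       else if hj2 : (j : ℕ) - k < l + 1 then Fin.cons (1 : ℝ) (τv ⟨(j : ℕ) - k, hj2⟩)
       else 0 : Fin (m + 1) → ℝ) i))
  else 0

open Finset

section AffineDependence

variable {𝕜 E ι : Type*} [Field 𝕜] [AddCommGroup E] [Module 𝕜 E] [Fintype ι] {P : ι → E}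

theorem eq_zero_of_affineDependence_of_affineIndependent_subtype {s : Finset ι}
    (hs : AffineIndependent 𝕜 (fun z : {i // i ∈ s} => P z)) {g : ι → 𝕜}
    (hsum : ∑ i, g i = 0) (hwsum : ∑ i, g i • P i = 0) (hg : ∀ i ∉ s, g i = 0) : g = 0 := by
  have hsum_s : ∑ z : {i // i ∈ s}, g z = 0 := by
    rw [sum_coe_sort, sum_subset (subset_univ s) fun i _ hi => hg i hi, hsum]
  have hwsum_s : ∑ z : {i // i ∈ s}, g z • P z = 0 := by
    rw [sum_coe_sort s fun i => g i • P i,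
      sum_subset (subset_univ s) fun i _ hi => by rw [hg i hi, zero_smul], hwsum]
  rw [affineIndependent_iff_of_fintype] at hs
  funext i
  by_cases hi : i ∈ s
  · exact hs (fun z => g z) hsum_s
      (by rwa [weightedVSub_eq_linear_combination _ hsum_s]) ⟨i, hi⟩
  · exact hg i hi

theorem eq_smul_of_affineDependence [DecidableEq ι] {i₀ : ι}
    (hP : AffineIndependent 𝕜 (fun z : {i // i ∈ univ.erase i₀} => P z)) {e f : ι → 𝕜}
    (he : ∑ i, e i = 0) (he' : ∑ i, e i • P i = 0) (hf : ∑ i, f i = 0)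
    (hf' : ∑ i, f i • P i = 0) (hei₀ : e i₀ ≠ 0) : f = (f i₀ / e i₀) • e := by
  rw [← sub_eq_zero]
  refine eq_zero_of_affineDependence_of_affineIndependent_subtype hP ?_ ?_ ?_
  · simp [sum_sub_distrib, ← mul_sum, he, hf]
  · simp [sub_smul, sum_sub_distrib, mul_smul, ← smul_sum, he', hf']
  · intro i hi
    obtain rfl : i = i₀ := by simpa using hi
    simp [hei₀]

end AffineDependence

section TwoFamilies

variable {𝕜 E α β : Type*} [Field 𝕜] [AddCommGroup E] [Module 𝕜 E] [Fintype α] [Fintype β]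

theorem exists_weights_of_mem_affineSpan_range {v : α → E} {x : E}
    (hx : x ∈ affineSpan 𝕜 (Set.range v)) : ∃ w : α → 𝕜, ∑ i, w i = 1 ∧ ∑ i, w i • v i = x := by
  obtain ⟨w, hw, rfl⟩ := eq_affineCombination_of_mem_affineSpan_of_fintype hx
  exact ⟨w, hw, (univ.affineCombination_eq_linear_combination v w hw).symm⟩

theorem affineDependence_sumElim {σ : α → E} {τ : β → E} {a : α → 𝕜} {c : β → 𝕜}
    (ha : ∑ i, a i = 1) (hc : ∑ j, c j = 1) (hac : ∑ i, a i • σ i = ∑ j, c j • τ j) :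
    ∑ i, Sum.elim a (-c) i = 0 ∧ ∑ i, Sum.elim a (-c) i • Sum.elim σ τ i = 0 := by
  simp [Fintype.sum_sum_type, ha, hc, hac]

theorem affineSpan_inter_affineSpan_subsingleton [DecidableEq α] [DecidableEq β]
    {σ : α → E} {τ : β → E}
    (h : ∀ i, AffineIndependent 𝕜 (fun z : {x // x ∈ univ.erase i} => Sum.elim σ τ z.1)) :
    ((affineSpan 𝕜 (Set.range σ) : Set E) ∩ affineSpan 𝕜 (Set.range τ)).Subsingleton := by
  rintro p ⟨hpσ, hpτ⟩ q ⟨hqσ, hqτ⟩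
  obtain ⟨a, ha, rfl⟩ := exists_weights_of_mem_affineSpan_range hpσ
  obtain ⟨b, hb, rfl⟩ := exists_weights_of_mem_affineSpan_range hqσ
  obtain ⟨c, hc, hcp⟩ := exists_weights_of_mem_affineSpan_range hpτ
  obtain ⟨d, hd, hdq⟩ := exists_weights_of_mem_affineSpan_range hqτ
  obtain ⟨i₀, -, hai₀⟩ := exists_ne_zero_of_sum_ne_zero (ha ▸ one_ne_zero : ∑ i, a i ≠ 0)
  obtain ⟨he, he'⟩ := affineDependence_sumElim ha hc hcp.symm
  obtain ⟨hf, hf'⟩ := affineDependence_sumElim hb hd hdq.symm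
  have hfe := eq_smul_of_affineDependence (h (.inl i₀)) he he' hf hf' hai₀
  set t := Sum.elim b (-d) (.inl i₀) / Sum.elim a (-c) (.inl i₀)
  have hba : ∀ i, b i = t * a i := fun i => by simpa using congr_fun hfe (.inl i)
  have ht : t = 1 := by simpa [hba, ← mul_sum, ha] using hb
  simp [hba, ht]

end TwoFamilies

theorem Real.abs_sign_le_one (r : ℝ) : |Real.sign r| ≤ 1 := by
  rcases Real.sign_apply_eq r with h | h | h <;> simp [h]

/-- Two affine simplices of complementary dimensions `k + ℓ = m` in `ℝ^m` whose
combined `m+2` vertices are in general position (any `m+1` of them affinely independent) meet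
in at most one point, and hence their intersection number satisfies `|ℐ(σ,τ)| ≤ 1`. -/
theorem stmt8 (m k l : ℕ) (hkl : k + l = m)
    (σv : Fin (k + 1) → Fin m → ℝ) (τv : Fin (l + 1) → Fin m → ℝ)
    (hgp : ∀ S : Finset (Fin (k + 1) ⊕ Fin (l + 1)), S.card ≤ m + 1 →
      AffineIndependent ℝ (fun z : {a // a ∈ S} => Sum.elim σv τv z.1)) :
    ((convexHull ℝ (Set.range σv)) ∩ (convexHull ℝ (Set.range τv))).Subsingleton ∧
    |simplexInter σv τv| ≤ 1 := by
  have hspan := affineSpan_inter_affineSpan_subsingleton fun i =>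
    hgp (univ.erase i) (by simp [card_erase_of_mem, ← hkl]; omega)
  refine ⟨hspan.anti (Set.inter_subset_inter (convexHull_subset_affineSpan _)
    (convexHull_subset_affineSpan _)), ?_⟩
  unfold simplexInter
  split_ifs
  · exact Real.abs_sign_le_one _
  · simp
end

section
/- Let f, g : V → ℝ^m be two general position maps such that their deformation cochain λ_{f,g} is defined, and let τ_1 × τ_2 be an (m−1)-cell of the deleted product (i.e., τ_1, τ_2 are disjoint simplices with dim τ_1 + dim τ_2 = m − 1). Then λ_{f,g}(τ_1 × τ_2) = (−1)^{(dim τ_1 + 1)(dim τ_2 + 1)} λ_{f,g}(τ_2 × τ_1). -/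
open Classical in
/-- The signed intersection number of two smooth parametrized surfaces
`φ : U → ℝ^n`, `ψ : W → ℝ^n` of complementary dimensions `k + l = n`: the sum over the
intersection points (pairs of parameters with equal image) of the sign of the determinant of
the combined Jacobian; it is `0` when the intersection set is not finite. -/
noncomputable def surfInter {k l n : ℕ} (U : Set (Fin k → ℝ)) (W : Set (Fin l → ℝ))
    (φ : (Fin k → ℝ) → Fin n → ℝ) (ψ : (Fin l → ℝ) → Fin n → ℝ) : ℝ :=
  ∑ᶠ p ∈ {q : (Fin k → ℝ) × (Fin l → ℝ) | q.1 ∈ U ∧ q.2 ∈ W ∧ φ q.1 = ψ q.2},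
    Real.sign (Matrix.det (Matrix.of fun (i j : Fin n) =>
      if hj : (j : ℕ) < k then fderiv ℝ φ p.1 (Pi.single (⟨(j : ℕ), hj⟩ : Fin k) 1) i
      else if hj2 : (j : ℕ) - k < l then
        fderiv ℝ ψ p.2 (Pi.single (⟨(j : ℕ) - k, hj2⟩ : Fin l) 1) i
      else 0))

/-- The parameter domain for the ruled surface over an `(a-1)`-simplex: the first coordinate
is the time `t ∈ [0,1]`, the remaining coordinates are nonnegative barycentric coordinates
with sum at most `1`. -/
def simplexDom (a : ℕ) : Set (Fin a → ℝ) :=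
  {w | (∀ j : Fin a, (j : ℕ) ≠ 0 → 0 ≤ w j) ∧
       (∑ j : Fin a, if (j : ℕ) = 0 then 0 else w j) ≤ 1 ∧
       ∀ h : 0 < a, 0 ≤ w ⟨0, h⟩ ∧ w ⟨0, h⟩ ≤ 1}

open Classical in
/-- The ruled deformation surface `h_{f,g}(|A| × [0,1])`, parametrized: for the simplex with
vertex set the finset `A` (vertices in increasing order), the map sends the time coordinate
`t = w 0` and barycentric coordinates `w j` (`j ≠ 0`) to
`(t·f(x) + (1−t)·g(x), t)` where `x` is the corresponding point of `|A|`. -/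
noncomputable def defSurf {N m : ℕ} (f g : Fin (N + 1) → Fin m → ℝ)
    (A : Finset (Fin (N + 1))) (w : Fin A.card → ℝ) : Fin (m + 1) → ℝ :=
  if h : 0 < A.card then
    Fin.snoc
      ((w ⟨0, h⟩) • (f (A.orderEmbOfFin rfl ⟨0, h⟩) +
          ∑ j : Fin A.card, (if (j : ℕ) = 0 then 0 else w j) •
            (f (A.orderEmbOfFin rfl j) - f (A.orderEmbOfFin rfl ⟨0, h⟩)))
        + (1 - w ⟨0, h⟩) • (g (A.orderEmbOfFin rfl ⟨0, h⟩) +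
          ∑ j : Fin A.card, (if (j : ℕ) = 0 then 0 else w j) •
            (g (A.orderEmbOfFin rfl j) - g (A.orderEmbOfFin rfl ⟨0, h⟩))))
      (w ⟨0, h⟩)
  else 0

/-- The deformation cochain `λ_{f,g}` evaluated on the cell `A × B` of the deleted product:
the signed intersection number of the ruled surfaces `h_{f,g}(|A| × [0,1])` and
`h_{f,g}(|B| × [0,1])` in `ℝ^{m+1}`. -/
noncomputable def lam {N m : ℕ} (f g : Fin (N + 1) → Fin m → ℝ)
    (A B : Finset (Fin (N + 1))) : ℝ :=
  surfInter (n := m + 1) (simplexDom A.card) (simplexDom B.card) (defSurf f g A) (defSurf f g B)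

open Classical in
/-- The intersection cocycle `φ_f(A × B) = (−1)^{dim A} ℐ(f(A), f(B))`, where `ℐ` is `0` if
the geometric simplices are disjoint and otherwise the sign of the determinant
`det((1,p),(1,f(a_1)),…,(1,f(a_k)),(1,f(b_1)),…,(1,f(b_ℓ)))` at an intersection point `p`
(vertices listed in increasing order). -/
noncomputable def phi {N m : ℕ} (f : Fin (N + 1) → Fin m → ℝ)
    (A B : Finset (Fin (N + 1))) : ℝ :=
  (-1 : ℝ) ^ (A.card - 1) *
    (if h : ((convexHull ℝ (f '' (A : Set (Fin (N + 1))))) ∩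
        (convexHull ℝ (f '' (B : Set (Fin (N + 1)))))).Nonempty then
      Real.sign (Matrix.det (Matrix.of fun (i j : Fin (m + 1)) =>
        (if (j : ℕ) = 0 then Fin.cons (1 : ℝ) h.some
         else if hj : (j : ℕ) < A.card then
           Fin.cons (1 : ℝ) (f (A.orderEmbOfFin rfl ⟨(j : ℕ), hj⟩))
         else if hj2 : (j : ℕ) - A.card + 1 < B.card then
           Fin.cons (1 : ℝ) (f (B.orderEmbOfFin rfl ⟨(j : ℕ) - A.card + 1, hj2⟩))
         else 0 : Fin (m + 1) → ℝ) i))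
    else 0)

/-!
Swapping the two surfaces turns each intersection point `(p, q)` into `(q, p)`, and the combined
Jacobian at `(q, p)` is the one at `(p, q)` with its `l` columns coming from `ψ` moved in front of
its `k` columns coming from `φ`; this changes the sign of the determinant by `(-1)^(k l)`.
-/

open Fin.NatCast in
theorem finRotate_pow_apply {n : ℕ} [NeZero n] (b : ℕ) (i : Fin n) :
    (finRotate n ^ b) i = i + (b : Fin n) := by
  induction b with
  | zero => simp
  | succ b ih => rw [pow_succ', Equiv.Perm.mul_apply, finRotate_apply, ih, Nat.cast_succ, add_assoc]

namespace Matrix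

variable {R : Type*} [CommRing R]

/-- The zero padding only occurs when `a + b ≠ n`. -/
def appendCols {n a b : ℕ} (C₁ : Fin a → Fin n → R) (C₂ : Fin b → Fin n → R) :
    Matrix (Fin n) (Fin n) R :=
  of fun i j => if hj : (j : ℕ) < a then C₁ ⟨j, hj⟩ i
    else if hj' : (j : ℕ) - a < b then C₂ ⟨(j : ℕ) - a, hj'⟩ i else 0

theorem appendCols_eq_submatrix_finRotate_pow {n a b : ℕ} (hab : a + b = n + 1)
    (C₁ : Fin a → Fin (n + 1) → R) (C₂ : Fin b → Fin (n + 1) → R) :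
    appendCols C₁ C₂ = (appendCols C₂ C₁).submatrix id (finRotate (n + 1) ^ b) := by
  ext i j
  have hrot : ((finRotate (n + 1) ^ b) j : ℕ) = ((j : ℕ) + b) % (n + 1) := by
    rw [finRotate_pow_apply, Fin.val_add, Fin.val_natCast, Nat.add_mod_mod]
  have hj := j.isLt
  simp only [appendCols, submatrix_apply, id_eq, of_apply]
  by_cases hja : (j : ℕ) < a
  · have hmod : ((j : ℕ) + b) % (n + 1) = j + b := Nat.mod_eq_of_lt (by omega)
    rw [dif_pos hja, dif_neg (by omega), dif_pos (by omega)]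
    congr 2
    simp [hrot, hmod]
  · have hmod : ((j : ℕ) + b) % (n + 1) = j - a := by
      rw [Nat.mod_eq_sub_mod (by omega), Nat.mod_eq_of_lt (by omega)]
      omega
    rw [dif_neg hja, dif_pos (by omega), dif_pos (by omega)]
    congr 2
    simp [hrot, hmod]

/-- The column permutation is the `b`-th power of the cyclic rotation, of sign
`(-1)^((a + b - 1) b) = (-1)^(a b)`. -/
theorem det_appendCols_comm {n a b : ℕ} (hab : a + b = n)
    (C₁ : Fin a → Fin n → R) (C₂ : Fin b → Fin n → R) :
    (appendCols C₁ C₂).det = (-1) ^ (a * b) * (appendCols C₂ C₁).det := by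
  rcases n with _ | n
  · obtain ⟨rfl, rfl⟩ : a = 0 ∧ b = 0 := by omega
    simp
  rw [appendCols_eq_submatrix_finRotate_pow hab, det_permute', map_pow, sign_finRotate]
  have hexp : n * b = a * b + b * (b - 1) := by
    rcases b with _ | b
    · simp
    · rw [show n = a + b by omega, Nat.add_sub_cancel]
      ring
  push_cast
  rw [← pow_mul, hexp, pow_add, (Nat.even_mul_pred_self b).neg_one_pow, mul_one, mul_comm]

end Matrix

theorem Real.sign_neg_one_pow_mul (k : ℕ) (x : ℝ) :
    Real.sign ((-1) ^ k * x) = (-1) ^ k * Real.sign x := by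
  rcases k.even_or_odd with hk | hk
  · simp [hk.neg_one_pow]
  · simp [hk.neg_one_pow, Real.sign_neg]

theorem surfInter_comm {k l n : ℕ} (hkl : k + l = n) (U : Set (Fin k → ℝ))
    (W : Set (Fin l → ℝ)) (φ : (Fin k → ℝ) → Fin n → ℝ) (ψ : (Fin l → ℝ) → Fin n → ℝ) :
    surfInter U W φ ψ = (-1) ^ (k * l) * surfInter W U ψ φ := by
  unfold surfInter
  rw [mul_finsum_mem]
  refine finsum_mem_eq_of_bijOn Prod.swap ⟨?_, Prod.swap_injective.injOn, ?_⟩ ?_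
  · rintro p ⟨hU, hW, hp⟩
    exact ⟨hW, hU, hp.symm⟩
  · rintro q ⟨hW, hU, hq⟩
    exact ⟨q.swap, ⟨hU, hW, hq.symm⟩, q.swap_swap⟩
  · intro p _
    exact (congrArg Real.sign (Matrix.det_appendCols_comm hkl
      (fun v => fderiv ℝ φ p.1 (Pi.single v 1)) (fun v => fderiv ℝ ψ p.2 (Pi.single v 1)))).trans
      (Real.sign_neg_one_pow_mul _ _)

theorem stmt13_general (m N : ℕ) (f g : Fin (N + 1) → Fin m → ℝ)
    (A B : Finset (Fin (N + 1))) (hdim : A.card + B.card = m + 1) :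
    lam f g A B = (-1 : ℝ) ^ (A.card * B.card) * lam f g B A :=
  surfInter_comm hdim _ _ _ _

/-- For general position maps `f, g` (with their union in general position and
`f(i) = g(j)` only for `i = j`) and an `(m−1)`-cell `A × B` of the deleted product
(disjoint nonempty vertex sets with `dim A + dim B = m − 1`), the deformation cochain
satisfies `λ_{f,g}(A × B) = (−1)^{(dim A + 1)(dim B + 1)} λ_{f,g}(B × A)`. -/
theorem stmt13 (m N : ℕ) (f g : Fin (N + 1) → Fin m → ℝ)
    (hinj : ∀ i j, f i = g j → i = j)
    (hgp : ∀ S : Finset (Fin m → ℝ), (S : Set (Fin m → ℝ)) ⊆ Set.range f ∪ Set.range g →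
      S.card ≤ m + 1 → AffineIndependent ℝ (fun p : {y // y ∈ S} => p.1))
    (A B : Finset (Fin (N + 1))) (hA : A.Nonempty) (hB : B.Nonempty)
    (hdisj : Disjoint A B) (hdim : A.card + B.card = m + 1) :
    lam f g A B = (-1 : ℝ) ^ (A.card * B.card) * lam f g B A :=
  stmt13_general m N f g A B hdim
end
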